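/- arXiv:1806.11540 — 2 statements merged into one kernel-verified Lean document; each statement's English description precedes it below -/
import Mathlib

section
/- Fix ḡ_0 ∈ S, set Ŝ = S ∖ {ḡ_0} (so |Ŝ| = [H:F]/2 − 1 = [H:ℚ]/(2d) − 1), and for 1 ≤ i ≤ d and g ∈ Ŝ put η_{i,g} = h_i^{-1}(g(η)) · (h_i^{-1}(ḡ_0(η)))^{-1}. Then: (i) for each i, the family (η_{i,g})_{g∈Ŝ} is a ℤ-basis of V_i, which is therefore free abelian of rank [H:ℚ]/(2d) − 1; (ii) the full family (η_{i,g})_{1≤i≤d, g∈Ŝ} is multiplicatively independent (any relation ∏_{i,g} η_{i,g}^{c_{i,g}} = 1 with c_{i,g} ∈ ℤ forces all c_{i,g} = 0) and is a ℤ-basis of the subgroup of 𝓞_H^× generated by V_1, …, V_d; in particular this subgroup is the internal direct sum of the V_i, and V_i ∩ V_j = {1} whenever i ≠ j. -/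
/-!
Up to the factor `τ`, which fixes `η`, the units `h_i⁻¹ g η` (`i ≤ d`, `g ∈ S`) are conjugates
`t η` with pairwise distinct `t ∈ T`: the elements `h_i⁻¹ g` lie in distinct cosets of `{1, τ}`,
because the `h_i` represent distinct cosets of the normal subgroup `G` and `S` is a transversal
of `{1, τ}` in `G`. The only relations among the `t η` have constant exponents, so a relation
among the `h_i⁻¹ g η` whose exponents sum to zero for each `i` is trivial. Dividing by
`h_i⁻¹ g₀ η` identifies zero-sum exponent vectors on `S` with arbitrary ones on `S ∖ {g₀}`, which
gives the bases; finally `|S| = |G| / 2 = [H:ℚ] / (2d)`.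
-/

open NumberField

/-- The action of a `ℚ`-automorphism of a number field `H` on the units of its
ring of integers. -/
noncomputable def galU (H : Type*) [Field H] [NumberField H] (g : H ≃ₐ[ℚ] H) :
    (𝓞 H)ˣ ≃* (𝓞 H)ˣ :=
  Units.mapEquiv (galRestrict ℤ ℚ H (𝓞 H) g).toRingEquiv.toMulEquiv

/-- The subgroup `V_i = { ∏_{g ∈ S} (h_i⁻¹(g(η)))^(a_g) : ∑ a_g = 0 }` of `𝓞_H^×`,
here given as a set, with `hi` playing the role of `h_i`. -/
noncomputable def VSet (H : Type*) [Field H] [NumberField H]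
    (S : Finset (H ≃ₐ[ℚ] H)) (η : (𝓞 H)ˣ) (hi : H ≃ₐ[ℚ] H) : Set ((𝓞 H)ˣ) :=
  { u | ∃ a : (H ≃ₐ[ℚ] H) → ℤ,
      (∑ g ∈ S, a g) = 0 ∧ u = ∏ g ∈ S, galU H (hi⁻¹ * g) η ^ a g }

open Finset

section ZPowProducts

variable {A α : Type*} [CommGroup A]

theorem prod_zpow_eq_zpow_sum (x : A) (s : Finset α) (f : α → ℤ) :
    ∏ a ∈ s, x ^ f a = x ^ ∑ a ∈ s, f a := by
  induction s using Finset.cons_induction with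
  | empty => simp
  | cons a s ha ih => rw [prod_cons, sum_cons, ih, zpow_add]

variable [DecidableEq α] {S : Finset α} {g0 : α}

theorem sum_update_neg_sum_erase (hg0 : g0 ∈ S) (c : α → ℤ) :
    ∑ g ∈ S, Function.update c g0 (-∑ g ∈ S.erase g0, c g) g = 0 := by
  rw [← add_sum_erase S _ hg0, Function.update_self,
    sum_congr rfl fun g hg => Function.update_of_ne (ne_of_mem_erase hg) _ _, neg_add_cancel]

theorem prod_erase_zpow_mul_inv (hg0 : g0 ∈ S) (x : α → A) (c : α → ℤ) :
    ∏ g ∈ S.erase g0, (x g * (x g0)⁻¹) ^ c g =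
      ∏ g ∈ S, x g ^ Function.update c g0 (-∑ g ∈ S.erase g0, c g) g := by
  rw [← mul_prod_erase S _ hg0, Function.update_self, zpow_neg, ← prod_zpow_eq_zpow_sum,
    ← prod_inv_distrib, ← prod_mul_distrib]
  refine prod_congr rfl fun g hg => ?_
  rw [Function.update_of_ne (ne_of_mem_erase hg), mul_zpow, inv_zpow, mul_comm]

theorem prod_zpow_eq_prod_erase_of_sum_eq_zero (hg0 : g0 ∈ S) (x : α → A) {a : α → ℤ}
    (ha : ∑ g ∈ S, a g = 0) :
    ∏ g ∈ S, x g ^ a g = ∏ g ∈ S.erase g0, (x g * (x g0)⁻¹) ^ a g := by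
  have ha0 : -∑ g ∈ S.erase g0, a g = a g0 := by
    rw [← add_sum_erase S _ hg0] at ha; omega
  rw [prod_erase_zpow_mul_inv hg0, ha0, Function.update_eq_self]

end ZPowProducts

section Families

variable {A ι α : Type*} [CommGroup A] [Fintype ι]

theorem prod_prod_zpow_add (y : ι → α → A) (s : Finset α) (c c' : ι → α → ℤ) :
    ∏ k, ∏ g ∈ s, y k g ^ (c + c') k g =
      (∏ k, ∏ g ∈ s, y k g ^ c k g) * ∏ k, ∏ g ∈ s, y k g ^ c' k g := by
  simp only [Pi.add_apply, zpow_add, prod_mul_distrib]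

theorem prod_prod_zpow_neg (y : ι → α → A) (s : Finset α) (c : ι → α → ℤ) :
    ∏ k, ∏ g ∈ s, y k g ^ (-c) k g = (∏ k, ∏ g ∈ s, y k g ^ c k g)⁻¹ := by
  simp only [Pi.neg_apply, zpow_neg, prod_inv_distrib]

variable [DecidableEq ι]

theorem prod_prod_zpow_single (y : ι → α → A) (s : Finset α) (i : ι) (c : α → ℤ) :
    ∏ k, ∏ g ∈ s, y k g ^ (Pi.single i c : ι → α → ℤ) k g = ∏ g ∈ s, y i g ^ c g := by
  rw [Fintype.prod_eq_single i fun k hk => by simp [hk], Pi.single_eq_same]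

variable {y : ι → α → A} {s : Finset α}

theorem eq_zero_of_prod_zpow_eq_one
    (hind : ∀ c : ι → α → ℤ, ∏ k, ∏ g ∈ s, y k g ^ c k g = 1 → ∀ k, ∀ g ∈ s, c k g = 0)
    (i : ι) (c : α → ℤ) (hc : ∏ g ∈ s, y i g ^ c g = 1) : ∀ g ∈ s, c g = 0 := by
  intro g hg
  simpa using hind (Pi.single i c) (by rw [prod_prod_zpow_single, hc]) i g hg

theorem exists_prod_prod_zpow_of_mem_closure {V : ι → Set A}
    (hV : ∀ i, ∀ u ∈ V i, ∃ c : α → ℤ, u = ∏ g ∈ s, y i g ^ c g)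
    {u : A} (hu : u ∈ Subgroup.closure (⋃ i, V i)) :
    ∃ c : ι → α → ℤ, u = ∏ k, ∏ g ∈ s, y k g ^ c k g := by
  induction hu using Subgroup.closure_induction with
  | mem u hu =>
    obtain ⟨i, hui⟩ := Set.mem_iUnion.mp hu
    obtain ⟨c, rfl⟩ := hV i u hui
    exact ⟨Pi.single i c, (prod_prod_zpow_single y s i c).symm⟩
  | one => exact ⟨0, by simp⟩
  | mul u v _ _ hu hv =>
    obtain ⟨⟨c, rfl⟩, ⟨c', rfl⟩⟩ := And.intro hu hv
    exact ⟨c + c', (prod_prod_zpow_add y s c c').symm⟩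
  | inv u _ hu =>
    obtain ⟨c, rfl⟩ := hu
    exact ⟨-c, (prod_prod_zpow_neg y s c).symm⟩

theorem inter_eq_one_of_prod_zpow_eq_one {V : ι → Set A} (hV1 : ∀ i, 1 ∈ V i)
    (hV : ∀ i, ∀ u ∈ V i, ∃ c : α → ℤ, u = ∏ g ∈ s, y i g ^ c g)
    (hind : ∀ c : ι → α → ℤ, ∏ k, ∏ g ∈ s, y k g ^ c k g = 1 → ∀ k, ∀ g ∈ s, c k g = 0)
    {i j : ι} (hij : i ≠ j) : V i ∩ V j = {1} := by
  refine Set.Subset.antisymm (fun u ⟨hui, huj⟩ => ?_) (by simp [hV1])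
  obtain ⟨c, rfl⟩ := hV i u hui
  obtain ⟨c', hc'⟩ := hV j _ huj
  have hrel : ∏ k, ∏ g ∈ s, y k g ^ (Pi.single i c + -Pi.single j c' : ι → α → ℤ) k g = 1 := by
    rw [prod_prod_zpow_add, prod_prod_zpow_neg, prod_prod_zpow_single, prod_prod_zpow_single,
      ← hc', mul_inv_cancel]
  refine prod_eq_one fun g hg => ?_
  have := hind _ hrel i g hg
  simp only [Pi.add_apply, Pi.neg_apply, Pi.single_eq_same, Pi.single_eq_of_ne hij, Pi.zero_apply,
    neg_zero, add_zero] at this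
  rw [this, zpow_zero]

end Families

theorem exists_const_of_prod_zpow_eq_one {Γ A κ : Type*} [CommGroup A] [DecidableEq Γ]
    {f : Γ → A} {T : Finset Γ}
    (hker : ∀ a : Γ → ℤ, ∏ t ∈ T, f t ^ a t = 1 → ∃ c : ℤ, ∀ t ∈ T, a t = c)
    {K : Finset κ} {e : κ → Γ} (heT : ∀ k ∈ K, e k ∈ T) (he : Set.InjOn e K) {b : κ → ℤ}
    (hb : ∏ k ∈ K, f (e k) ^ b k = 1) : ∃ c : ℤ, ∀ k ∈ K, b k = c := by
  let a : Γ → ℤ := fun t => ∑ k ∈ K with e k = t, b k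
  have hfiber : ∀ k ∈ K, a (e k) = b k := fun k hk => by
    show ∑ k' ∈ K with e k' = e k, b k' = b k
    rw [show {k' ∈ K | e k' = e k} = {k} by
      ext k'; simp only [mem_filter, mem_singleton]
      exact ⟨fun ⟨hk', he'⟩ => he hk' hk he', fun h => ⟨h ▸ hk, h ▸ rfl⟩⟩, sum_singleton]
  have ha : ∏ t ∈ T, f t ^ a t = 1 := by
    rw [← hb, ← prod_fiberwise_of_maps_to heT]
    refine prod_congr rfl fun t _ => ?_
    rw [← prod_zpow_eq_zpow_sum]
    exact prod_congr rfl fun k hk => by rw [(mem_filter.mp hk).2]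
  obtain ⟨c, hc⟩ := hker a ha
  exact ⟨c, fun k hk => hfiber k hk ▸ hc _ (heT k hk)⟩

section CosetTransversals

variable {Γ ι : Type*} [Group Γ] {N : Subgroup Γ} {τ : Γ} {h : ι → Γ} {S : Finset Γ}

theorem eq_of_inv_mul_eq_inv_mul [N.Normal] (hreps : ∀ g : Γ, ∃! i, (h i)⁻¹ * g ∈ N)
    {i j : ι} {x y : Γ} (hx : x ∈ N) (hy : y ∈ N) (hxy : (h i)⁻¹ * x = (h j)⁻¹ * y) :
    i = j := by
  have hij : h i * (h j)⁻¹ ∈ N := by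
    rw [show h i * (h j)⁻¹ = x * y⁻¹ by
      rw [eq_mul_inv_iff_mul_eq, mul_assoc, ← hxy, mul_inv_cancel_left]]
    exact mul_mem hx (inv_mem hy)
  exact (hreps (h i)).unique (by simp) (‹N.Normal›.mem_comm hij)

theorem eq_of_eq_mul_of_transversal (hτ2 : τ * τ = 1) (hSN : ∀ s ∈ S, s ∈ N)
    (hS : ∀ g ∈ N, ∃! s, s ∈ S ∧ (s = g ∨ s = g * τ)) {g g' w : Γ} (hg : g ∈ S) (hg' : g' ∈ S)
    (hw : w = 1 ∨ w = τ) (hgg' : g = g' * w) : g = g' := by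
  rcases hw with hw | hw
  · rw [hgg', hw, mul_one]
  · have : g' = g * τ := by rw [hgg', hw, mul_assoc, hτ2, mul_one]
    exact (hS g (hSN g hg)).unique ⟨hg, Or.inl rfl⟩ ⟨hg', Or.inr this⟩

theorem exists_eq_mul_of_eq_or_eq_mul (hτ2 : τ * τ = 1) {x y t : Γ}
    (hx : t = x ∨ t = x * τ) (hy : t = y ∨ t = y * τ) : ∃ w, (w = 1 ∨ w = τ) ∧ x = y * w := by
  have hτ : τ⁻¹ = τ := inv_eq_of_mul_eq_one_right hτ2
  rcases hx with rfl | rfl <;> rcases hy with hy | hy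
  · exact ⟨1, Or.inl rfl, by rw [hy, mul_one]⟩
  · exact ⟨τ, Or.inr rfl, hy⟩
  · exact ⟨τ, Or.inr rfl, by rw [← mul_inv_eq_iff_eq_mul, hτ, hy]⟩
  · exact ⟨1, Or.inl rfl, by rw [mul_one]; exact mul_right_cancel hy⟩

theorem eq_zero_of_prod_prod_zpow_eq_one [Fintype ι] [DecidableEq Γ] [N.Normal]
    (hτ2 : τ * τ = 1) (hτN : τ ∈ N) (hreps : ∀ g : Γ, ∃! i, (h i)⁻¹ * g ∈ N)
    (hSN : ∀ s ∈ S, s ∈ N) (hS : ∀ g ∈ N, ∃! s, s ∈ S ∧ (s = g ∨ s = g * τ))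
    {A : Type*} [CommGroup A] {f : Γ → A} (hf : ∀ x, f (x * τ) = f x) {T : Finset Γ}
    (hT : ∀ g : Γ, ∃! t, t ∈ T ∧ (t = g ∨ t = g * τ))
    (hker : ∀ a : Γ → ℤ, ∏ t ∈ T, f t ^ a t = 1 → ∃ c : ℤ, ∀ t ∈ T, a t = c)
    {b : ι → Γ → ℤ} (hsum : ∀ i, ∑ g ∈ S, b i g = 0)
    (hprod : ∏ i, ∏ g ∈ S, f ((h i)⁻¹ * g) ^ b i g = 1) : ∀ i, ∀ g ∈ S, b i g = 0 := by
  choose ρ hρT hρ using fun x => (hT x).exists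
  have hfρ : ∀ x, f (ρ x) = f x := fun x => by
    rcases hρ x with e | e <;> rw [e]
    exact hf x
  have hinj : Set.InjOn (fun p : ι × Γ => ρ ((h p.1)⁻¹ * p.2))
      ((univ ×ˢ S : Finset (ι × Γ)) : Set (ι × Γ)) := by
    rintro ⟨i, g⟩ hig ⟨j, g'⟩ hjg' he
    simp only [coe_product, Set.mem_prod, mem_coe] at hig hjg'
    have he' : ρ ((h i)⁻¹ * g) = ρ ((h j)⁻¹ * g') := he
    obtain ⟨w, hw, hx⟩ := exists_eq_mul_of_eq_or_eq_mul hτ2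
      (hρ ((h i)⁻¹ * g)) (by rw [he']; exact hρ _)
    have hwN : w ∈ N := by rcases hw with hw | hw <;> rw [hw]; exacts [one_mem _, hτN]
    obtain rfl : i = j := eq_of_inv_mul_eq_inv_mul hreps (hSN g hig.2)
      (mul_mem (hSN g' hjg'.2) hwN) (by rw [hx, mul_assoc])
    rw [mul_assoc] at hx
    exact Prod.ext rfl
      (eq_of_eq_mul_of_transversal hτ2 hSN hS hig.2 hjg'.2 hw (mul_left_cancel hx))
  obtain ⟨c, hc⟩ := exists_const_of_prod_zpow_eq_one hker (fun p _ => hρT _) hinj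
    (b := fun p => b p.1 p.2) (by simpa only [hfρ, prod_product] using hprod)
  intro i g hg
  have hc0 : c = 0 := by
    have hsumi := hsum i
    rw [sum_congr rfl fun g hg => hc (i, g) (mem_product.2 ⟨mem_univ _, hg⟩), sum_const,
      nsmul_eq_mul] at hsumi
    exact (mul_eq_zero.mp hsumi).resolve_left (by exact_mod_cast (card_pos.2 ⟨g, hg⟩).ne')
  exact hc0 ▸ hc (i, g) (mem_product.2 ⟨mem_univ _, hg⟩)

theorem two_mul_card_eq_card_of_transversal [Fintype Γ] [DecidableEq Γ] (hτ2 : τ * τ = 1)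
    (hτ1 : τ ≠ 1) (hτN : τ ∈ N) (hSN : ∀ s ∈ S, s ∈ N)
    (hS : ∀ g ∈ N, ∃! s, s ∈ S ∧ (s = g ∨ s = g * τ)) : 2 * S.card = Nat.card N := by
  classical
  have hN : ({g | g ∈ N} : Finset Γ) = S.biUnion fun s => {s, s * τ} := by
    ext g
    simp only [mem_filter, mem_univ, true_and, mem_biUnion, mem_insert, mem_singleton]
    constructor
    · intro hg
      obtain ⟨s, ⟨hs, rfl | rfl⟩, -⟩ := hS g hg
      · exact ⟨s, hs, Or.inl rfl⟩
      · exact ⟨_, hs, Or.inr (by rw [mul_assoc, hτ2, mul_one])⟩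
    · rintro ⟨s, hs, rfl | rfl⟩
      exacts [hSN _ hs, mul_mem (hSN _ hs) hτN]
  have hτS : ∀ s ∈ S, ∀ s' ∈ S, s' = s * τ → s = s' := fun s hs s' hs' e =>
    (hS _ (hSN _ hs)).unique ⟨hs, Or.inl rfl⟩ ⟨hs', Or.inr e⟩
  have hdisj : (S : Set Γ).PairwiseDisjoint fun s => ({s, s * τ} : Finset Γ) := by
    intro s hs s' hs' hss'
    simp only [Function.onFun, disjoint_left, mem_insert, mem_singleton]
    rintro g (rfl | rfl) (hg' | hg') <;> apply hss'
    · exact hg'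
    · exact hτS _ hs _ hs' (by rw [hg', mul_assoc, hτ2, mul_one])
    · exact hτS _ hs _ hs' hg'.symm
    · exact mul_right_cancel hg'
  have hpair : ∀ s : Γ, ({s, s * τ} : Finset Γ).card = 2 := fun s =>
    card_pair fun hs => hτ1 (left_eq_mul.mp hs)
  rw [Nat.card_eq_fintype_card, Fintype.card_subtype, hN, card_biUnion hdisj,
    sum_congr rfl fun s _ => hpair s, sum_const, smul_eq_mul, mul_comm]

end CosetTransversals

theorem galU_mul (H : Type*) [Field H] [NumberField H] (g₁ g₂ : H ≃ₐ[ℚ] H) (u : (𝓞 H)ˣ) :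
    galU H (g₁ * g₂) u = galU H g₁ (galU H g₂ u) := by
  ext
  simp [galU, map_mul (galRestrict ℤ ℚ H (𝓞 H)) g₁ g₂, AlgEquiv.mul_apply]

theorem stmt_3_general (H : Type*) [Field H] [NumberField H] [IsGalois ℚ H]
    [DecidableEq (H ≃ₐ[ℚ] H)]
    (τ : H ≃ₐ[ℚ] H)
    (hτ2 : τ * τ = 1) (hτ1 : τ ≠ 1)
    -- `G = Gal(H/F)` for a totally real subfield `F ⊆ H`, Galois over `ℚ`, of degree `d`
    (d : ℕ)
    (Gsub : Subgroup (H ≃ₐ[ℚ] H)) [Gsub.Normal] (hGd : Gsub.index = d)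
    (hτG : τ ∈ Gsub)
    -- representatives of the left cosets of `G` in `Gal(H/ℚ)`
    (h : Fin d → (H ≃ₐ[ℚ] H)) (hreps : ∀ g : H ≃ₐ[ℚ] H, ∃! i : Fin d, (h i)⁻¹ * g ∈ Gsub)
    -- the Minkowski unit `η`
    (η : (𝓞 H)ˣ) (hητ : galU H τ η = η)
    (T : Finset (H ≃ₐ[ℚ] H))
    (hT : ∀ g : H ≃ₐ[ℚ] H, ∃! t, t ∈ T ∧ (t = g ∨ t = g * τ))
    (hηker : ∀ a : (H ≃ₐ[ℚ] H) → ℤ,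
      (∏ g ∈ T, galU H g η ^ a g) = 1 ↔ ∃ c : ℤ, ∀ g ∈ T, a g = c)
    -- representatives of the left cosets of `{1, τ}` in `G`
    (S : Finset (H ≃ₐ[ℚ] H)) (hSG : ∀ s ∈ S, s ∈ Gsub)
    (hS : ∀ g ∈ Gsub, ∃! s, s ∈ S ∧ (s = g ∨ s = g * τ))
    -- a fixed element `g0 ∈ S`
    (g0 : H ≃ₐ[ℚ] H) (hg0 : g0 ∈ S) :
    -- `|Ŝ| = [H:ℚ]/(2d) - 1`
    (S.erase g0).card = Module.finrank ℚ H / (2 * d) - 1 ∧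
    -- (i) `(η_{i,g})_{g ∈ Ŝ}` is a `ℤ`-basis of `V_i`
    (∀ i : Fin d,
      (∀ g ∈ S.erase g0,
        galU H ((h i)⁻¹ * g) η * (galU H ((h i)⁻¹ * g0) η)⁻¹ ∈ VSet H S η (h i)) ∧
      (∀ u ∈ VSet H S η (h i), ∃ c : (H ≃ₐ[ℚ] H) → ℤ,
        u = ∏ g ∈ S.erase g0,
          (galU H ((h i)⁻¹ * g) η * (galU H ((h i)⁻¹ * g0) η)⁻¹) ^ c g) ∧
      (∀ c : (H ≃ₐ[ℚ] H) → ℤ,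
        (∏ g ∈ S.erase g0,
          (galU H ((h i)⁻¹ * g) η * (galU H ((h i)⁻¹ * g0) η)⁻¹) ^ c g) = 1 →
        ∀ g ∈ S.erase g0, c g = 0)) ∧
    -- (ii) the full family is multiplicatively independent …
    (∀ c : Fin d → (H ≃ₐ[ℚ] H) → ℤ,
      (∏ i : Fin d, ∏ g ∈ S.erase g0,
        (galU H ((h i)⁻¹ * g) η * (galU H ((h i)⁻¹ * g0) η)⁻¹) ^ c i g) = 1 →
      ∀ i : Fin d, ∀ g ∈ S.erase g0, c i g = 0) ∧
    -- … and generates the subgroup generated by `V_1, …, V_d`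
    (∀ u ∈ Subgroup.closure (⋃ i : Fin d, VSet H S η (h i)),
      ∃ c : Fin d → (H ≃ₐ[ℚ] H) → ℤ,
        u = ∏ i : Fin d, ∏ g ∈ S.erase g0,
          (galU H ((h i)⁻¹ * g) η * (galU H ((h i)⁻¹ * g0) η)⁻¹) ^ c i g) ∧
    -- in particular the `V_i` intersect trivially
    (∀ i j : Fin d, i ≠ j → VSet H S η (h i) ∩ VSet H S η (h j) = {1}) := by
  classical
  have hd : 0 < d := hGd ▸ Nat.pos_of_ne_zero Subgroup.index_ne_zero_of_finite
  have hcard : Module.finrank ℚ H = S.card * (2 * d) := by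
    rw [← IsGalois.card_aut_eq_finrank, ← Gsub.card_mul_index, hGd,
      ← two_mul_card_eq_card_of_transversal hτ2 hτ1 hτG hSG hS]
    ring
  have hf : ∀ x, galU H (x * τ) η = galU H x η := fun x => by rw [galU_mul, hητ]
  have span : ∀ i, ∀ u ∈ VSet H S η (h i), ∃ c : (H ≃ₐ[ℚ] H) → ℤ, u = ∏ g ∈ S.erase g0,
      (galU H ((h i)⁻¹ * g) η * (galU H ((h i)⁻¹ * g0) η)⁻¹) ^ c g := by
    rintro i u ⟨a, ha, rfl⟩
    exact ⟨a, prod_zpow_eq_prod_erase_of_sum_eq_zero hg0 _ ha⟩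
  have ind : ∀ c : Fin d → (H ≃ₐ[ℚ] H) → ℤ, ∏ i, ∏ g ∈ S.erase g0,
      (galU H ((h i)⁻¹ * g) η * (galU H ((h i)⁻¹ * g0) η)⁻¹) ^ c i g = 1 →
      ∀ i, ∀ g ∈ S.erase g0, c i g = 0 := by
    intro c hc i g hg
    have hzero := eq_zero_of_prod_prod_zpow_eq_one hτ2 hτG hreps hSG hS hf hT (fun a => (hηker a).mp)
      (fun i => sum_update_neg_sum_erase hg0 (c i))
      (by simpa only [prod_erase_zpow_mul_inv hg0] using hc) i g (mem_of_mem_erase hg)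
    rwa [Function.update_of_ne (ne_of_mem_erase hg)] at hzero
  refine ⟨by rw [hcard, Nat.mul_div_cancel _ (by positivity), card_erase_of_mem hg0],
    fun i => ⟨fun g hg => ?_, span i, eq_zero_of_prod_zpow_eq_one ind i⟩, ind,
    fun u hu => exists_prod_prod_zpow_of_mem_closure span hu,
    fun i j hij => inter_eq_one_of_prod_zpow_eq_one
      (fun i => show (1 : (𝓞 H)ˣ) ∈ VSet H S η (h i) from ⟨0, by simp, by simp⟩) span ind hij⟩
  refine ⟨_, sum_update_neg_sum_erase hg0 (Pi.single g 1), ?_⟩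
  rw [← prod_erase_zpow_mul_inv hg0, prod_eq_single_of_mem g hg fun g' _ hg' => by
    rw [Pi.single_eq_of_ne hg', zpow_zero], Pi.single_eq_same, zpow_one]

/-- With `Ŝ = S \\ {g0}` and `η_{i,g} = h_i⁻¹(g(η)) / h_i⁻¹(g0(η))`:
(i) for each `i`, the family `(η_{i,g})_{g ∈ Ŝ}` is a `ℤ`-basis of `V_i`, which is free
abelian of rank `[H:ℚ]/(2d) - 1`; (ii) the full family `(η_{i,g})_{i,g}` is
multiplicatively independent and is a `ℤ`-basis of the subgroup generated by
`V_1, …, V_d`; in particular `V_i ∩ V_j = {1}` for `i ≠ j`. -/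
theorem stmt_3 (H : Type*) [Field H] [NumberField H] [IsGalois ℚ H]
    [DecidableEq (H ≃ₐ[ℚ] H)]
    (hH : (H →+* ℝ) → False)
    (ι : H →+* ℂ) (τ : H ≃ₐ[ℚ] H)
    (hιτ : ∀ x : H, ι (τ x) = starRingEnd ℂ (ι x))
    (hτ2 : τ * τ = 1) (hτ1 : τ ≠ 1)
    -- `G = Gal(H/F)` for a totally real subfield `F ⊆ H`, Galois over `ℚ`, of degree `d`
    (d : ℕ) (hd : 0 < d)
    (Gsub : Subgroup (H ≃ₐ[ℚ] H)) [Gsub.Normal] (hGd : Gsub.index = d)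
    (hτG : τ ∈ Gsub)
    -- representatives of the left cosets of `G` in `Gal(H/ℚ)`, with `h 0 = 1`
    (h : Fin d → (H ≃ₐ[ℚ] H)) (hreps : ∀ g : H ≃ₐ[ℚ] H, ∃! i : Fin d, (h i)⁻¹ * g ∈ Gsub)
    (h1 : h ⟨0, hd⟩ = 1)
    -- the Minkowski unit `η`
    (η : (𝓞 H)ˣ) (hητ : galU H τ η = η)
    (T : Finset (H ≃ₐ[ℚ] H))
    (hT : ∀ g : H ≃ₐ[ℚ] H, ∃! t, t ∈ T ∧ (t = g ∨ t = g * τ))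
    (hηT : (∏ g ∈ T, galU H g η) = 1)
    (hηker : ∀ a : (H ≃ₐ[ℚ] H) → ℤ,
      (∏ g ∈ T, galU H g η ^ a g) = 1 ↔ ∃ c : ℤ, ∀ g ∈ T, a g = c)
    -- representatives of the left cosets of `{1, τ}` in `G`
    (S : Finset (H ≃ₐ[ℚ] H)) (hSG : ∀ s ∈ S, s ∈ Gsub)
    (hS : ∀ g ∈ Gsub, ∃! s, s ∈ S ∧ (s = g ∨ s = g * τ))
    -- a fixed element `g0 ∈ S`
    (g0 : H ≃ₐ[ℚ] H) (hg0 : g0 ∈ S) :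
    -- `|Ŝ| = [H:ℚ]/(2d) - 1`
    (S.erase g0).card = Module.finrank ℚ H / (2 * d) - 1 ∧
    -- (i) `(η_{i,g})_{g ∈ Ŝ}` is a `ℤ`-basis of `V_i`
    (∀ i : Fin d,
      (∀ g ∈ S.erase g0,
        galU H ((h i)⁻¹ * g) η * (galU H ((h i)⁻¹ * g0) η)⁻¹ ∈ VSet H S η (h i)) ∧
      (∀ u ∈ VSet H S η (h i), ∃ c : (H ≃ₐ[ℚ] H) → ℤ,
        u = ∏ g ∈ S.erase g0,
          (galU H ((h i)⁻¹ * g) η * (galU H ((h i)⁻¹ * g0) η)⁻¹) ^ c g) ∧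
      (∀ c : (H ≃ₐ[ℚ] H) → ℤ,
        (∏ g ∈ S.erase g0,
          (galU H ((h i)⁻¹ * g) η * (galU H ((h i)⁻¹ * g0) η)⁻¹) ^ c g) = 1 →
        ∀ g ∈ S.erase g0, c g = 0)) ∧
    -- (ii) the full family is multiplicatively independent …
    (∀ c : Fin d → (H ≃ₐ[ℚ] H) → ℤ,
      (∏ i : Fin d, ∏ g ∈ S.erase g0,
        (galU H ((h i)⁻¹ * g) η * (galU H ((h i)⁻¹ * g0) η)⁻¹) ^ c i g) = 1 →
      ∀ i : Fin d, ∀ g ∈ S.erase g0, c i g = 0) ∧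
    -- … and generates the subgroup generated by `V_1, …, V_d`
    (∀ u ∈ Subgroup.closure (⋃ i : Fin d, VSet H S η (h i)),
      ∃ c : Fin d → (H ≃ₐ[ℚ] H) → ℤ,
        u = ∏ i : Fin d, ∏ g ∈ S.erase g0,
          (galU H ((h i)⁻¹ * g) η * (galU H ((h i)⁻¹ * g0) η)⁻¹) ^ c i g) ∧
    -- in particular the `V_i` intersect trivially
    (∀ i j : Fin d, i ≠ j → VSet H S η (h i) ∩ VSet H S η (h j) = {1}) :=
  stmt_3_general H τ hτ2 hτ1 d Gsub hGd hτG h hreps η hητ T hT hηker S hSG hS g0 hg0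
end

section
/- Let u_1, …, u_d ∈ 𝓞_H^× be units such that the d elements e_k := Σ_{c∈C} ψ(c) · (c^{-1}(u_k) ⊗ 1) of 𝓞_H^× ⊗_ℤ ℂ form a ℂ-basis of the ψ-eigenspace { v ∈ 𝓞_H^× ⊗_ℤ ℂ : c · v = ψ(c) v for all c ∈ C }. Then the d × d complex matrix whose (k,i) entry is Σ_{c∈C} ψ(c) · log |ι(h_i(c^{-1}(u_k)))| is invertible, i.e. its determinant is nonzero. -/
open NumberField TensorProduct

set_option maxHeartbeats 1000000

/-- `𝓞_H^× ⊗_ℤ ℂ` as a `ℂ`-vector space. -/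
noncomputable abbrev UnitsModC (H : Type*) [Field H] [NumberField H] : Type _ :=
  ℂ ⊗[ℤ] Additive ((𝓞 H)ˣ)

/-- The `ℂ`-linear action of `g ∈ Gal(H/ℚ)` on `𝓞_H^× ⊗_ℤ ℂ` induced by the Galois
action on units. -/
noncomputable def actAC (H : Type*) [Field H] [NumberField H] (g : H ≃ₐ[ℚ] H) :
    UnitsModC H →ₗ[ℂ] UnitsModC H :=
  LinearMap.baseChange ℂ
    (AddMonoidHom.toIntLinearMap (AddEquiv.toAddMonoidHom (MulEquiv.toAdditive (galU H g))))

/-! Suppose a vector `x` kills the matrix from the left and put `v = ∑ x_k e_k`, a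
`ψ`-eigenvector. Its complexified logarithmic coordinates `ℓ(v)(g)`, for `g ∈ Gal(H/ℚ)`, satisfy
`ℓ(v)(g c) = ψ(c) ℓ(v)(g)` for `c ∈ C` and `ℓ(v)(τ g) = ℓ(v)(g)`, and `ℓ(v)(h_i)` is the `i`-th
entry of `x M = 0`. As `F` is totally real and `K` totally complex, every conjugate `h⁻¹ τ h` lies
in `G ∖ C`; since `[G : C] = 2`, writing `g = h_i m` with `m ∈ G ∖ C` gives `τ g ∈ h_i C`. Hence
`ℓ(v) = 0`, and by Dirichlet's unit theorem `ℓ` is injective on `𝓞_H^× ⊗ ℂ`, so `v = 0`,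
contradicting the independence of the `e_k`. -/

theorem Subgroup.mul_mem_of_relIndex_eq_two {Γ : Type*} [Group Γ] {C G : Subgroup Γ}
    (hCG : C.relIndex G = 2) {a b : Γ} (ha : a ∈ G) (hb : b ∈ G) (haC : a ∉ C) (hbC : b ∉ C) :
    a * b ∈ C := by
  have hindex : (C.subgroupOf G).index = 2 := hCG
  have := Subgroup.mul_mem_iff_of_index_two hindex (a := ⟨a, ha⟩) (b := ⟨b, hb⟩)
  simp only [Subgroup.mem_subgroupOf, Subgroup.coe_mul] at this
  exact this.mpr (iff_of_false haC hbC)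

theorem eq_zero_of_eq_zero_on_cosetReps {Γ R ι : Type*} [Group Γ] [MulZeroClass R]
    {G C : Subgroup Γ} (hCG : C.relIndex G = 2) {τ : Γ}
    (hτ : ∀ g : Γ, g⁻¹ * τ * g ∈ G ∧ g⁻¹ * τ * g ∉ C)
    {f : Γ → R} (χ : C → R) (hfC : ∀ g (c : C), f (g * c) = χ c * f g)
    (hfτ : ∀ g, f (τ * g) = f g)
    (h : ι → Γ) (hrep : ∀ g, ∃ i, (h i)⁻¹ * g ∈ G) (hfh : ∀ i, f (h i) = 0) : f = 0 := by
  funext g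
  obtain ⟨i, hi⟩ := hrep g
  have hf_mul : ∀ m ∈ C, f (h i * m) = 0 := fun m hm => by
    rw [show m = ((⟨m, hm⟩ : C) : Γ) from rfl, hfC, hfh, mul_zero]
  by_cases hmC : (h i)⁻¹ * g ∈ C
  · simpa using hf_mul _ hmC
  · rw [Pi.zero_apply, ← hfτ]
    simpa [mul_assoc] using
      hf_mul _ (C.mul_mem_of_relIndex_eq_two hCG (hτ (h i)).1 hi (hτ (h i)).2 hmC)

section Conjugation

variable {H : Type*} [Field H] [NumberField H] {ι : H →+* ℂ} {τ : H ≃ₐ[ℚ] H}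

theorem conj_mul_apply_eq_self_iff (hιτ : ∀ x : H, ι (τ x) = starRingEnd ℂ (ι x))
    (g : H ≃ₐ[ℚ] H) (y : H) :
    (g⁻¹ * τ * g) y = y ↔ starRingEnd ℂ (ι (g y)) = ι (g y) := by
  rw [← hιτ, ι.injective.eq_iff, AlgEquiv.mul_apply, AlgEquiv.mul_apply, AlgEquiv.aut_inv,
    AlgEquiv.symm_apply_eq]

theorem conj_mul_mem_of_forall_im_eq_zero (hιτ : ∀ x : H, ι (τ x) = starRingEnd ℂ (ι x))
    {G : Subgroup (H ≃ₐ[ℚ] H)}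
    (hF : ∀ φ : IntermediateField.fixedField G →+* ℂ, ∀ x, (φ x).im = 0) (g : H ≃ₐ[ℚ] H) :
    g⁻¹ * τ * g ∈ G := by
  rw [← IntermediateField.fixingSubgroup_fixedField G]
  intro y
  exact (conj_mul_apply_eq_self_iff hιτ g y).mpr <|
    Complex.conj_eq_iff_im.mpr (hF ((ι.comp g).comp (algebraMap _ H)) y)

theorem conj_mul_notMem_of_isEmpty_realEmbedding (hιτ : ∀ x : H, ι (τ x) = starRingEnd ℂ (ι x))
    {C : Subgroup (H ≃ₐ[ℚ] H)} (hK : (IntermediateField.fixedField C →+* ℝ) → False)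
    (g : H ≃ₐ[ℚ] H) : g⁻¹ * τ * g ∉ C := by
  intro hC
  refine hK (ComplexEmbedding.IsReal.embedding (φ := (ι.comp g).comp (algebraMap _ H)) ?_)
  rw [ComplexEmbedding.isReal_iff]
  ext y
  exact (conj_mul_apply_eq_self_iff hιτ g y).mp (y.2 ⟨_, hC⟩)

end Conjugation

theorem TensorProduct.tmul_eq_zero_of_isOfFinAddOrder {K M : Type*} [Field K] [CharZero K]
    [AddCommGroup M] (z : K) {a : M} (ha : IsOfFinAddOrder a) : z ⊗ₜ[ℤ] a = 0 := by
  have hn : ((addOrderOf a : ℤ) : K) ≠ 0 := by exact_mod_cast ha.addOrderOf_pos.ne'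
  calc z ⊗ₜ[ℤ] a = ((addOrderOf a : ℤ) • (z / (addOrderOf a : ℤ))) ⊗ₜ[ℤ] a := by
        rw [zsmul_eq_mul, mul_div_cancel₀ _ hn]
    _ = 0 := by rw [smul_tmul, natCast_zsmul, addOrderOf_nsmul_eq_zero, tmul_zero]

theorem LinearMap.injective_of_linearIndependent_of_span_eq_top {R M N ι : Type*} [Ring R]
    [AddCommGroup M] [Module R M] [AddCommGroup N] [Module R N] [Fintype ι] (f : M →ₗ[R] N)
    {v : ι → M} (hv : Submodule.span R (Set.range v) = ⊤) (hfv : LinearIndependent R (f ∘ v)) :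
    Function.Injective f := by
  refine (injective_iff_map_eq_zero f).mpr fun x hx => ?_
  have hx_span : x ∈ Submodule.span R (Set.range v) := hv ▸ Submodule.mem_top
  obtain ⟨c, rfl⟩ := (Submodule.mem_span_range_iff_exists_fun R).mp hx_span
  have hc : c = 0 := funext (Fintype.linearIndependent_iff.mp hfv c (by simpa using hx))
  simp [hc]

theorem LinearIndependent.ofReal_comp {ι κ : Type*} [Fintype ι] {v : ι → κ → ℝ}
    (hv : LinearIndependent ℝ v) : LinearIndependent ℂ fun i k => (v i k : ℂ) := by
  rw [Fintype.linearIndependent_iff] at hv ⊢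
  intro z hz i
  have hre := hv (fun i => (z i).re) (by ext k; simpa using congr_arg (fun w => (w k).re) hz)
  have him := hv (fun i => (z i).im) (by ext k; simpa using congr_arg (fun w => (w k).im) hz)
  exact Complex.ext (hre i) (him i)

section LogEmbedding

variable {H : Type*} [Field H] [NumberField H]

theorem galU_apply_coe (g : H ≃ₐ[ℚ] H) (x : (𝓞 H)ˣ) :
    ((galU H g x : 𝓞 H) : H) = g ((x : 𝓞 H) : H) :=
  algebraMap_galRestrict_apply ℤ g (x : 𝓞 H)

theorem galU_mul_apply (g g' : H ≃ₐ[ℚ] H) (x : (𝓞 H)ˣ) :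
    galU H (g * g') x = galU H g (galU H g' x) :=
  Units.ext <| RingOfIntegers.coe_injective <| by
    simp only [galU_apply_coe, AlgEquiv.mul_apply]

theorem actAC_tmul (g : H ≃ₐ[ℚ] H) (z : ℂ) (x : (𝓞 H)ˣ) :
    actAC H g (z ⊗ₜ[ℤ] Additive.ofMul x) = z ⊗ₜ[ℤ] Additive.ofMul (galU H g x) :=
  rfl

theorem span_one_tmul_fundSystem (K : Type*) [Field K] [CharZero K] :
    Submodule.span K (Set.range fun j => (1 : K) ⊗ₜ[ℤ] Additive.ofMul (Units.fundSystem H j)) =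
      ⊤ := by
  refine Submodule.eq_top_iff'.mpr fun v => ?_
  induction v using TensorProduct.induction_on with
  | zero => exact zero_mem _
  | add v w hv hw => exact add_mem hv hw
  | tmul z a =>
    obtain ⟨⟨ζ, e⟩, hx, -⟩ := Units.exist_unique_eq_mul_prod H a.toMul
    have ha : a = Additive.ofMul (ζ : (𝓞 H)ˣ) +
        ∑ j, e j • Additive.ofMul (Units.fundSystem H j) := by
      rw [← ofMul_toMul a, hx]
      simp [ofMul_mul, ofMul_prod, ofMul_zpow]
    have hζ : IsOfFinAddOrder (Additive.ofMul (ζ : (𝓞 H)ˣ)) :=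
      isOfFinAddOrder_ofMul_iff.mpr ((CommGroup.mem_torsion _).mp ζ.2)
    rw [← mul_one z, ← smul_eq_mul, ← smul_tmul', ha, tmul_add,
      tmul_eq_zero_of_isOfFinAddOrder _ hζ, zero_add, tmul_sum]
    exact Submodule.smul_mem _ _ <| Submodule.sum_mem _ fun j _ => by
      rw [← mk_apply, map_zsmul]
      exact zsmul_mem (Submodule.subset_span (Set.mem_range_self j)) _

variable (ι : H →+* ℂ)

noncomputable def logNormGal : Additive (𝓞 H)ˣ →+ ((H ≃ₐ[ℚ] H) → ℝ) where
  toFun a g := Real.log ‖ι (g ((a.toMul : 𝓞 H) : H))‖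
  map_zero' := by ext; simp
  map_add' a b := by
    ext g
    have hne : ∀ x : (𝓞 H)ˣ, ‖ι (g ((x : 𝓞 H) : H))‖ ≠ 0 := fun x => by simp
    simp [Real.log_mul (hne _) (hne _)]

noncomputable def logNormGalC : UnitsModC H →ₗ[ℂ] ((H ≃ₐ[ℚ] H) → ℂ) :=
  LinearMap.liftBaseChange ℂ
    ((Complex.ofRealHom.toAddMonoidHom.compLeft _).comp (logNormGal ι)).toIntLinearMap

theorem logNormGalC_tmul (z : ℂ) (x : (𝓞 H)ˣ) (g : H ≃ₐ[ℚ] H) :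
    logNormGalC ι (z ⊗ₜ[ℤ] Additive.ofMul x) g = z * Real.log ‖ι (g ((x : 𝓞 H) : H))‖ := by
  simp [logNormGalC, logNormGal]

theorem logNormGalC_actAC (c : H ≃ₐ[ℚ] H) (v : UnitsModC H) (g : H ≃ₐ[ℚ] H) :
    logNormGalC ι (actAC H c v) g = logNormGalC ι v (g * c) := by
  induction v using TensorProduct.induction_on with
  | zero => simp
  | add v w hv hw => simp only [map_add, Pi.add_apply, hv, hw]
  | tmul z a =>
    rw [← ofMul_toMul a, actAC_tmul, logNormGalC_tmul, logNormGalC_tmul, galU_apply_coe,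
      AlgEquiv.mul_apply]

theorem logNormGalC_mul_left (τ : H ≃ₐ[ℚ] H) (hιτ : ∀ x : H, ι (τ x) = starRingEnd ℂ (ι x))
    (v : UnitsModC H) (g : H ≃ₐ[ℚ] H) : logNormGalC ι v (τ * g) = logNormGalC ι v g := by
  induction v using TensorProduct.induction_on with
  | zero => simp
  | add v w hv hw => simp only [map_add, Pi.add_apply, hv, hw]
  | tmul z a =>
    rw [← ofMul_toMul a, logNormGalC_tmul, logNormGalC_tmul, AlgEquiv.mul_apply, hιτ,
      Complex.norm_conj]

theorem exists_algEquiv_infinitePlace_apply [IsGalois ℚ H] (w : InfinitePlace H) :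
    ∃ g : H ≃ₐ[ℚ] H, ∀ x, w x = ‖ι (g x)‖ := by
  obtain ⟨σ, rfl⟩ := InfinitePlace.exists_smul_eq_of_comap_eq (k := ℚ)
    (w := InfinitePlace.mk ι) (w' := w) (Subsingleton.elim _ _)
  exact ⟨σ.symm, fun x => rfl⟩

theorem linearIndependent_logNormGal_fundSystem [IsGalois ℚ H] :
    LinearIndependent ℝ fun j => logNormGal ι (Additive.ofMul (Units.fundSystem H j)) := by
  choose g hg using exists_algEquiv_infinitePlace_apply ι
  let T : ((H ≃ₐ[ℚ] H) → ℝ) →ₗ[ℝ] Units.dirichletUnitTheorem.logSpace H :=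
    LinearMap.pi fun w => (InfinitePlace.mult w.1 : ℝ) • LinearMap.proj (g w.1)
  refine LinearIndependent.of_comp T ?_
  convert Units.isMaxRank_fundSystem H using 1
  ext j w
  simp [T, logNormGal, hg]

theorem logNormGalC_injective [IsGalois ℚ H] : Function.Injective (logNormGalC ι) := by
  refine (logNormGalC ι).injective_of_linearIndependent_of_span_eq_top
    (span_one_tmul_fundSystem ℂ) ?_
  have hcomp : logNormGalC ι ∘ (fun j => (1 : ℂ) ⊗ₜ[ℤ] Additive.ofMul (Units.fundSystem H j)) =
      fun j g => (logNormGal ι (Additive.ofMul (Units.fundSystem H j)) g : ℂ) := by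
    ext j g
    simp [logNormGalC_tmul, logNormGal]
  rw [hcomp]
  exact (linearIndependent_logNormGal_fundSystem ι).ofReal_comp

end LogEmbedding

theorem stmt_9_general (H : Type*) [Field H] [NumberField H] [IsGalois ℚ H]
    (ι : H →+* ℂ) (τ : H ≃ₐ[ℚ] H)
    (hιτ : ∀ x : H, ι (τ x) = starRingEnd ℂ (ι x))
    -- `G = Gal(H/F)` for a totally real subfield `F ⊆ H` of degree `d`
    (d : ℕ)
    (Gsub : Subgroup (H ≃ₐ[ℚ] H))
    (hFreal : ∀ φ : ↥(IntermediateField.fixedField Gsub) →+* ℂ,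
      ∀ x : ↥(IntermediateField.fixedField Gsub), (φ x).im = 0)
    -- representatives of the left cosets of `G` in `Gal(H/ℚ)`, with `h 0 = 1`
    (h : Fin d → (H ≃ₐ[ℚ] H)) (hreps : ∀ g : H ≃ₐ[ℚ] H, ∃! i : Fin d, (h i)⁻¹ * g ∈ Gsub)
    -- `C = Gal(H/K)` for a totally complex quadratic extension `K` of `F` inside `H`
    (Csub : Subgroup (H ≃ₐ[ℚ] H)) [Fintype ↥Csub]
    (hKF : Csub.relIndex Gsub = 2)
    (hKcm : (↥(IntermediateField.fixedField Csub) →+* ℝ) → False)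
    -- `σ ∈ G ∖ C` and a character `ψ` of `C` with `ψ^σ ≠ ψ`
    (ψ : ↥Csub →* ℂ)
    -- units `u_1, …, u_d` such that the `e_k` form a basis of the `ψ`-eigenspace
    (u : Fin d → (𝓞 H)ˣ)
    (hindep : LinearIndependent ℂ (fun k : Fin d =>
      ∑ c : ↥Csub, ψ c •
        ((1 : ℂ) ⊗ₜ[ℤ] Additive.ofMul (galU H (↑c)⁻¹ (u k)) : UnitsModC H)))
    (hspan : Submodule.span ℂ (Set.range (fun k : Fin d =>
        ∑ c : ↥Csub, ψ c •
          ((1 : ℂ) ⊗ₜ[ℤ] Additive.ofMul (galU H (↑c)⁻¹ (u k)) : UnitsModC H))) =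
      ⨅ c : ↥Csub, Module.End.eigenspace (actAC H ↑c) (ψ c)) :
    (Matrix.of (fun k i : Fin d =>
      ∑ c : ↥Csub, ψ c *
        Real.log (norm
          (ι (((galU H (h i * (↑c)⁻¹) (u k) : (𝓞 H)ˣ) : 𝓞 H) : H))))).det ≠ 0 := by
  set e : Fin d → UnitsModC H := fun k =>
    ∑ c : ↥Csub, ψ c • ((1 : ℂ) ⊗ₜ[ℤ] Additive.ofMul (galU H (↑c)⁻¹ (u k)))
  rw [Ne, ← Matrix.exists_vecMul_eq_zero_iff]
  rintro ⟨x, hx0, hxM⟩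
  set v := ∑ k, x k • e k
  have hv_eigen (c : Csub) : actAC H c v = ψ c • v := by
    have hv : v ∈ ⨅ c : ↥Csub, Module.End.eigenspace (actAC H ↑c) (ψ c) :=
      hspan ▸ (Submodule.mem_span_range_iff_exists_fun ℂ).mpr ⟨x, rfl⟩
    exact Module.End.mem_eigenspace_iff.mp ((Submodule.mem_iInf _).mp hv c)
  have hv_reps (i : Fin d) : logNormGalC ι v (h i) = 0 := by
    simpa [v, e, logNormGalC_tmul, galU_apply_coe, galU_mul_apply, Matrix.vecMul, dotProduct,
      Finset.mul_sum] using congr_fun hxM i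
  have hv_zero : logNormGalC ι v = 0 :=
    eq_zero_of_eq_zero_on_cosetReps hKF
      (fun g => ⟨conj_mul_mem_of_forall_im_eq_zero hιτ hFreal g,
        conj_mul_notMem_of_isEmpty_realEmbedding hιτ hKcm g⟩)
      (fun c => ψ c) (fun g c => by
        rw [← logNormGalC_actAC, hv_eigen, map_smul, Pi.smul_apply, smul_eq_mul])
      (logNormGalC_mul_left ι τ hιτ v) h (fun g => (hreps g).exists) hv_reps
  exact hx0 <| funext <| Fintype.linearIndependent_iff.mp hindep x <|
    logNormGalC_injective ι (hv_zero.trans (map_zero _).symm)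

/-- Let `u_1, …, u_d ∈ 𝓞_H^×` be units such that the elements
`e_k = ∑_{c ∈ C} ψ(c) · (c⁻¹(u_k) ⊗ 1)` form a `ℂ`-basis of the `ψ`-eigenspace of
`𝓞_H^× ⊗_ℤ ℂ`.  Then the `d × d` matrix with `(k, i)` entry
`∑_{c ∈ C} ψ(c) · log |ι(h_i(c⁻¹(u_k)))|` has nonzero determinant. -/
theorem stmt_9 (H : Type*) [Field H] [NumberField H] [IsGalois ℚ H]
    (hH : (H →+* ℝ) → False)
    (ι : H →+* ℂ) (τ : H ≃ₐ[ℚ] H)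
    (hιτ : ∀ x : H, ι (τ x) = starRingEnd ℂ (ι x))
    (hτ2 : τ * τ = 1) (hτ1 : τ ≠ 1)
    -- `G = Gal(H/F)` for a totally real subfield `F ⊆ H` of degree `d`
    (d : ℕ) (hd : 0 < d)
    (Gsub : Subgroup (H ≃ₐ[ℚ] H)) (hGd : Gsub.index = d)
    (hFreal : ∀ φ : ↥(IntermediateField.fixedField Gsub) →+* ℂ,
      ∀ x : ↥(IntermediateField.fixedField Gsub), (φ x).im = 0)
    -- representatives of the left cosets of `G` in `Gal(H/ℚ)`, with `h 0 = 1`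
    (h : Fin d → (H ≃ₐ[ℚ] H)) (hreps : ∀ g : H ≃ₐ[ℚ] H, ∃! i : Fin d, (h i)⁻¹ * g ∈ Gsub)
    (h1 : h ⟨0, hd⟩ = 1)
    -- `C = Gal(H/K)` for a totally complex quadratic extension `K` of `F` inside `H`
    (Csub : Subgroup (H ≃ₐ[ℚ] H)) [Fintype ↥Csub] (hCG : Csub ≤ Gsub)
    (hKF : Csub.relIndex Gsub = 2)
    (hKcm : (↥(IntermediateField.fixedField Csub) →+* ℝ) → False)
    -- `σ ∈ G ∖ C` and a character `ψ` of `C` with `ψ^σ ≠ ψ`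
    (σ : H ≃ₐ[ℚ] H) (hσG : σ ∈ Gsub) (hσC : σ ∉ Csub)
    (ψ : ↥Csub →* ℂ)
    (hψ : ∃ c c' : ↥Csub, (↑c' : H ≃ₐ[ℚ] H) = σ * ↑c * σ⁻¹ ∧ ψ c' ≠ ψ c)
    -- units `u_1, …, u_d` such that the `e_k` form a basis of the `ψ`-eigenspace
    (u : Fin d → (𝓞 H)ˣ)
    (hindep : LinearIndependent ℂ (fun k : Fin d =>
      ∑ c : ↥Csub, ψ c •
        ((1 : ℂ) ⊗ₜ[ℤ] Additive.ofMul (galU H (↑c)⁻¹ (u k)) : UnitsModC H)))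
    (hspan : Submodule.span ℂ (Set.range (fun k : Fin d =>
        ∑ c : ↥Csub, ψ c •
          ((1 : ℂ) ⊗ₜ[ℤ] Additive.ofMul (galU H (↑c)⁻¹ (u k)) : UnitsModC H))) =
      ⨅ c : ↥Csub, Module.End.eigenspace (actAC H ↑c) (ψ c)) :
    (Matrix.of (fun k i : Fin d =>
      ∑ c : ↥Csub, ψ c *
        Real.log (norm
          (ι (((galU H (h i * (↑c)⁻¹) (u k) : (𝓞 H)ˣ) : 𝓞 H) : H))))).det ≠ 0 :=
  stmt_9_general H ι τ hιτ d Gsub hFreal h hreps Csub hKF hKcm ψ u hindep hspan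
end
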